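/- For all integers k ≥ 1, r ≥ 1 and j ≥ 0, the following identity of rational numbers holds: ∏_{i=0}^{k-1} C(r+i, j) / C(j+i, j) = (-1)^{kj} · (∏_{i=0}^{k-1} P_j(-(r+i))) / (j! · ∏_{i=2}^{k} P_j(i)), where P_j(x) = x(x+1)⋯(x+j-1) is the ascending factorial (Pochhammer) polynomial evaluated at the rational number x, with P_0(x) = 1. (This expresses the simple k-Narayana polynomial as the generalized hypergeometric function ₖF_{k-1}(-r, …, -r-k+1; 2, …, k; (-1)^k t).) -/
import Mathlib


/-- Ascending factorial (Pochhammer polynomial) `ascF x j = x(x+1)⋯(x+j-1)`, with `ascF x 0 = 1`. -/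
def ascF (x : ℚ) (j : ℕ) : ℚ := ∏ i ∈ Finset.range j, (x + i)

lemma ascF_nat_cast (m j : ℕ) : ascF (m : ℚ) j = (m.ascFactorial j : ℚ) := by
  induction j with
  | zero => simp [ascF]
  | succ n ih =>
    rw [ascF, Finset.prod_range_succ, ← ascF, ih, Nat.ascFactorial_succ]
    push_cast
    ring

lemma ascF_neg_nat (n j : ℕ) : ascF (-(n : ℚ)) j = (-1) ^ j * (n.descFactorial j : ℚ) := by
  induction j with
  | zero => simp [ascF]
  | succ m ih =>
    rw [ascF, Finset.prod_range_succ, ← ascF, ih, Nat.descFactorial_succ]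
    rcases Nat.lt_or_ge n m with h | h
    · rw [Nat.descFactorial_eq_zero_iff_lt.2 h]
      push_cast; ring
    · push_cast [Nat.cast_sub h]
      ring

lemma denom_eq (k j : ℕ) (hk : 1 ≤ k) :
    (j.factorial : ℚ) * ∏ i ∈ Finset.Icc 2 k, ascF (i : ℚ) j =
      ((j.factorial : ℚ)) ^ k * ∏ i ∈ Finset.range k, ((j + i).choose j : ℚ) := by
  induction k with
  | zero => omega
  | succ m ih =>
    rcases Nat.eq_or_lt_of_le hk with h1 | h1
    · have : m = 0 := by omega
      subst this
      simp [Finset.Icc_self, ascF_nat_cast]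
    · have hm : 1 ≤ m := by omega
      rw [Finset.prod_Icc_succ_top (by omega : 2 ≤ m + 1),
        Finset.prod_range_succ, ← mul_assoc, ih hm]
      have : ascF ((m + 1 : ℕ) : ℚ) j = (j.factorial : ℚ) * ((j + m).choose j : ℚ) := by
        rw [ascF_nat_cast, Nat.ascFactorial_eq_factorial_mul_choose]
        push_cast; ring
      push_cast at this ⊢
      rw [this, pow_succ]
      ring

/-- The simple `k`-Narayana number `𝒩_k(r,j) = ∏_{i=0}^{k-1} C(r+i, j)/C(j+i, j)` equals
`(-1)^{kj} · (∏_{i=0}^{k-1} P_j(-(r+i))) / (j! · ∏_{i=2}^{k} P_j(i))`, i.e. the `j`-th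
coefficient of `ₖF_{k-1}(-r, …, -r-k+1; 2, …, k; (-1)^k t)`. -/
theorem stmt9 (k r j : ℕ) (hk : 1 ≤ k) (hr : 1 ≤ r) :
    (∏ i ∈ Finset.range k, ((r + i).choose j : ℚ) / ((j + i).choose j : ℚ)) =
      (-1) ^ (k * j) * (∏ i ∈ Finset.range k, ascF (-((r : ℚ) + i)) j) /
        ((j.factorial : ℚ) * ∏ i ∈ Finset.Icc 2 k, ascF (i : ℚ) j) := by
  have hN : (∏ i ∈ Finset.range k, ascF (-((r : ℚ) + i)) j) =
      (-1) ^ (k * j) * ((j.factorial : ℚ)) ^ k *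
        ∏ i ∈ Finset.range k, ((r + i).choose j : ℚ) := by
    have h : ∀ i ∈ Finset.range k, ascF (-((r : ℚ) + i)) j =
        (-1) ^ j * (j.factorial : ℚ) * ((r + i).choose j : ℚ) := by
      intro i _
      have := ascF_neg_nat (r + i) j
      push_cast at this
      rw [this, Nat.descFactorial_eq_factorial_mul_choose]
      push_cast; ring
    rw [Finset.prod_congr rfl h, Finset.prod_mul_distrib, Finset.prod_const,
      mul_pow, ← pow_mul]
    simp [Finset.card_range, mul_comm j k]
  have hBne : (∏ i ∈ Finset.range k, ((j + i).choose j : ℚ)) ≠ 0 := by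
    apply Finset.prod_ne_zero_iff.2
    intro i _
    have : 0 < (j + i).choose j := Nat.choose_pos (by omega)
    positivity
  have hfne : ((j.factorial : ℚ)) ≠ 0 := by positivity
  rw [Finset.prod_div_distrib, hN, denom_eq k j hk]
  rw [div_eq_div_iff (by exact hBne) (by positivity)]
  have h1 : ((-1 : ℚ)) ^ (k * j) * ((-1 : ℚ)) ^ (k * j) = 1 := by
    rw [← pow_add]
    exact Even.neg_one_pow ⟨k * j, rfl⟩
  linear_combination (-(∏ x ∈ Finset.range k, ((r + x).choose j : ℚ)) *
    ((j.factorial : ℚ)) ^ k * ∏ i ∈ Finset.range k, ((j + i).choose j : ℚ)) * h1
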